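/- arXiv:1310.0950 — 2 statements merged into one kernel-verified Lean document; each statement's English description precedes it below -/
import Mathlib

section
/- Let T = (T₁, …, Tₙ) be a doubly commuting pure tuple on H. Then the map L_T : H → ℓ²(ℕⁿ, D_{T*}) defined by (L_T h)(k) = D_{T*} T*^k h is an isometry satisfying L_T Tᵢ* = Sᵢ* L_T for each i, where Sᵢ is the i-th coordinate shift on ℓ²(ℕⁿ, D_{T*}). -/
open Filter Topology
open scoped InnerProductSpace

/-!
Since `Dᵢ² = 1 - TᵢTᵢ*`, we have `‖Dᵢ z‖² + ‖Tᵢ* z‖² = ‖z‖²`; along the orbit of `Tᵢ*` these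
identities telescope, and purity gives `∑ₘ ‖Dᵢ Tᵢ*^m y‖² = ‖y‖²`. Double commutativity makes
`Dᵢ`, a function of `TᵢTᵢ*`, commute with `Tⱼ*` for `j ≠ i`, so
`D_{T*} T*^k = (D₀ T₀*^{k₀}) (∏_{i>0} Dᵢ Tᵢ*^{kᵢ})` and the one-variable identities compose to
`∑ₖ ‖D_{T*} T*^k x‖² = ‖x‖²`. The intertwining relation is `T*^{k+eᵢ} = T*^k Tᵢ*`.
-/

theorem hasSum_prod_of_nonneg {α β : Type*} {f : α × β → ℝ} (hf : 0 ≤ f) {g : α → ℝ} {s : ℝ}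
    (hfib : ∀ a, HasSum (fun b => f (a, b)) (g a)) (hg : HasSum g s) : HasSum f s := by
  have hfs : Summable f := (summable_prod_of_nonneg hf).2
    ⟨fun a => (hfib a).summable, by simpa only [(hfib _).tsum_eq] using hg.summable⟩
  rw [hfs.hasSum_iff, hfs.tsum_prod' fun a => (hfib a).summable]
  simp only [(hfib _).tsum_eq, hg.tsum_eq]

section NormSq

variable {E F G : Type*} [SeminormedAddCommGroup E] [SeminormedAddCommGroup F]
  [SeminormedAddCommGroup G]

theorem hasSum_norm_sq_comp {ι κ : Type*} {A : ι → F → G} {B : κ → E → F}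
    (hA : ∀ y, HasSum (fun i => ‖A i y‖ ^ 2) (‖y‖ ^ 2))
    (hB : ∀ x, HasSum (fun k => ‖B k x‖ ^ 2) (‖x‖ ^ 2)) (x : E) :
    HasSum (fun p : ι × κ => ‖A p.1 (B p.2 x)‖ ^ 2) (‖x‖ ^ 2) :=
  (Equiv.prodComm ι κ).symm.hasSum_iff.1 <|
    hasSum_prod_of_nonneg (fun _ => sq_nonneg _) (fun k => hA (B k x)) (hB x)

theorem hasSum_norm_sq_iterate {A : E → E} {D : E → F}
    (hAD : ∀ z, ‖D z‖ ^ 2 + ‖A z‖ ^ 2 = ‖z‖ ^ 2) {y : E}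
    (hy : Tendsto (fun m => A^[m] y) atTop (𝓝 0)) :
    HasSum (fun m => ‖D (A^[m] y)‖ ^ 2) (‖y‖ ^ 2) := by
  rw [hasSum_iff_tendsto_nat_of_nonneg (fun _ => sq_nonneg _)]
  have hpartial : ∀ N, ∑ m ∈ Finset.range N, ‖D (A^[m] y)‖ ^ 2 = ‖y‖ ^ 2 - ‖A^[N] y‖ ^ 2 := by
    intro N
    calc ∑ m ∈ Finset.range N, ‖D (A^[m] y)‖ ^ 2
        = ∑ m ∈ Finset.range N, (‖A^[m] y‖ ^ 2 - ‖A^[m + 1] y‖ ^ 2) :=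
          Finset.sum_congr rfl fun m _ => by rw [Function.iterate_succ_apply', ← hAD]; ring
      _ = ‖y‖ ^ 2 - ‖A^[N] y‖ ^ 2 := Finset.sum_range_sub' _ N
  simp only [hpartial]
  simpa using tendsto_const_nhds.sub (hy.norm.pow 2)

end NormSq

theorem ContinuousLinearMap.norm_sq_add_norm_sq {𝕜 E : Type*} [RCLike 𝕜] [NormedAddCommGroup E]
    [InnerProductSpace 𝕜 E] [CompleteSpace E] {A D : E →L[𝕜] E}
    (h : star D * D + star A * A = 1) (z : E) : ‖D z‖ ^ 2 + ‖A z‖ ^ 2 = ‖z‖ ^ 2 := by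
  have hz : (adjoint D ∘L D) z + (adjoint A ∘L A) z = z := by
    simpa [star_eq_adjoint] using congr($h z)
  rw [apply_norm_sq_eq_inner_adjoint_left, apply_norm_sq_eq_inner_adjoint_left, ← map_add,
    ← inner_add_left, hz, inner_self_eq_norm_sq]

theorem Commute.of_sq_left {A : Type*} [CStarAlgebra A] [PartialOrder A] [StarOrderedRing A]
    {a b : A} (ha : 0 ≤ a) (h : Commute (a ^ 2) b) : Commute a b :=
  CFC.sqrt_sq a ▸ h.cfcₙ_nnreal NNReal.sqrt

open scoped IsMulCommutative in
theorem List.prod_ofFn_pow_add_single {M : Type*} [Monoid M] {n : ℕ} {a : Fin n → M}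
    (ha : ∀ i j, Commute (a i) (a j)) (k : Fin n → ℕ) (i : Fin n) :
    (List.ofFn fun j => a j ^ (k + Pi.single i 1 : Fin n → ℕ) j).prod
      = (List.ofFn fun j => a j ^ k j).prod * a i := by
  -- compute in the commutative submonoid generated by the `a j`
  let S := Submonoid.closure (Set.range a)
  have : IsMulCommutative S := Submonoid.isMulCommutative_closure _ <| by
    rintro _ ⟨i, rfl⟩ _ ⟨j, rfl⟩
    exact ha i j
  let b : Fin n → S := fun j => ⟨a j, Submonoid.subset_closure ⟨j, rfl⟩⟩
  have hb : ∀ e : Fin n → ℕ,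
      (List.ofFn fun j => a j ^ e j).prod = ((∏ j, b j ^ e j : S) : M) := by
    intro e
    rw [← List.prod_ofFn, S.coe_list_prod, List.map_ofFn]
    rfl
  rw [hb, hb, show a i = (b i : M) from rfl, ← Submonoid.coe_mul]
  congr 1
  simp only [Pi.add_apply, pow_add, Finset.prod_mul_distrib]
  congr 1
  rw [Fintype.prod_eq_single i fun j hj => by simp [hj]]
  simp

theorem hasSum_norm_sq_prod_ofFn {𝕜 E : Type*} [NormedField 𝕜]
    [SeminormedAddCommGroup E] [NormedSpace 𝕜 E] {n : ℕ} {A D : Fin n → E →L[𝕜] E}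
    (hcomm : ∀ i j, i ≠ j → Commute (D i) (A j))
    (hD : ∀ i y, HasSum (fun m => ‖D i ((A i ^ m) y)‖ ^ 2) (‖y‖ ^ 2)) (x : E) :
    HasSum (fun k : Fin n → ℕ => ‖(List.ofFn D).prod ((List.ofFn fun i => A i ^ k i).prod x)‖ ^ 2)
      (‖x‖ ^ 2) := by
  induction n generalizing x with
  | zero => simp
  | succ n ih =>
    have hsplit : ∀ (m : ℕ) (k : Fin n → ℕ),
        (List.ofFn D).prod * (List.ofFn fun i => A i ^ (Fin.cons m k : Fin (n + 1) → ℕ) i).prod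
          = D 0 * A 0 ^ m *
            ((List.ofFn fun i => D i.succ).prod * (List.ofFn fun i => A i.succ ^ k i).prod) := by
      intro m k
      have hc : Commute (List.ofFn fun i => D i.succ).prod (A 0 ^ m) :=
        Commute.list_prod_left _ _ fun _ hd => by
          obtain ⟨i, rfl⟩ := List.mem_ofFn.1 hd
          exact (hcomm _ _ (Fin.succ_ne_zero i)).pow_right m
      simp only [List.ofFn_succ, List.prod_cons, Fin.cons_zero, Fin.cons_succ, mul_assoc,
        hc.left_comm]
    rw [← (Fin.consEquiv fun _ => ℕ).hasSum_iff]
    convert hasSum_norm_sq_comp (hD 0)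
      (ih (fun i j hij => hcomm i.succ j.succ (Fin.succ_injective _ |>.ne hij))
        (fun i => hD i.succ)) x using 2 with p
    exact congr(‖$(hsplit p.1 p.2) x‖ ^ 2)

theorem lp.norm_sq_eq_of_hasSum {ι : Type*} {E : ι → Type*} [∀ i, NormedAddCommGroup (E i)]
    (f : lp E 2) {s : ℝ} (hf : HasSum (fun i => ‖f i‖ ^ 2) s) : ‖f‖ ^ 2 = s := by
  simpa using (lp.hasSum_norm (by simp) f).unique (by simpa using hf)

theorem exists_linearIsometry_lp_two {𝕜 E G ι : Type*} [NormedField 𝕜]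
    [SeminormedAddCommGroup E] [NormedSpace 𝕜 E] [NormedAddCommGroup G] [NormedSpace 𝕜 G]
    {F : ι → E →L[𝕜] G} (hF : ∀ x, HasSum (fun k => ‖F k x‖ ^ 2) (‖x‖ ^ 2)) :
    ∃ L : E →ₗᵢ[𝕜] lp (fun _ : ι => G) 2, ∀ x k, L x k = F k x := by
  let L : E →ₗ[𝕜] lp (fun _ : ι => G) 2 :=
    { toFun x := ⟨fun k => F k x, memℓp_gen <| by simpa using (hF x).summable⟩
      map_add' x y := lp.ext <| funext fun k => map_add (F k) x y
      map_smul' c x := lp.ext <| funext fun k => map_smul (F k) c x }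
  refine ⟨⟨L, fun x => ?_⟩, fun x k => rfl⟩
  exact (sq_eq_sq₀ (norm_nonneg _) (norm_nonneg _)).1 (lp.norm_sq_eq_of_hasSum (L x) (hF x))

theorem stmt_10_general {H : Type*} [NormedAddCommGroup H] [InnerProductSpace ℂ H] [CompleteSpace H]
    (n : ℕ) (T : Fin n → (H →L[ℂ] H))
    (hcomm : ∀ i j, T i * T j = T j * T i)
    (hdc : ∀ i j, i ≠ j → T i * star (T j) = star (T j) * T i)
    (hpure : ∀ i (h : H),
      Filter.Tendsto (fun m : ℕ => ((star (T i)) ^ m) h) Filter.atTop (nhds 0))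
    (D : Fin n → (H →L[ℂ] H))
    (hDpos : ∀ i, (D i).IsPositive) (hDsq : ∀ i, (D i) ^ 2 = 1 - T i * star (T i)) :
    ∃ L : H →ₗᵢ[ℂ] lp (fun _ : Fin n → ℕ => H) 2,
      (∀ (h : H) (k : Fin n → ℕ),
        (L h) k = (List.ofFn fun i => D i).prod
          (((List.ofFn fun i => (star (T i)) ^ (k i)).prod) h)) ∧
      (∀ i (h : H) (k : Fin n → ℕ),
        (L (star (T i) h)) k = (L h) (k + Pi.single i 1)) := by
  have hstar : ∀ i j, Commute (star (T i)) (star (T j)) := fun i j =>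
    Commute.star_star (hcomm i j)
  have hDcomm : ∀ i j, i ≠ j → Commute (D i) (star (T j)) := fun i j hij => by
    refine Commute.of_sq_left ((D i).nonneg_iff_isPositive.2 (hDpos i)) ?_
    rw [hDsq i]
    exact (Commute.one_left _).sub_left (Commute.mul_left (hdc i j hij) (hstar i j))
  have hdefect : ∀ i z, ‖D i z‖ ^ 2 + ‖star (T i) z‖ ^ 2 = ‖z‖ ^ 2 := fun i =>
    ContinuousLinearMap.norm_sq_add_norm_sq <| by
      rw [(hDpos i).isSelfAdjoint.star_eq, star_star, ← sq, hDsq i, sub_add_cancel]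
  have hone : ∀ i y, HasSum (fun m => ‖D i ((star (T i) ^ m) y)‖ ^ 2) (‖y‖ ^ 2) := fun i y => by
    simpa only [FunLike.coe_pow_eq_iterate] using hasSum_norm_sq_iterate (hdefect i)
      (by simpa only [← FunLike.coe_pow_eq_iterate] using hpure i y)
  have hP : ∀ x, HasSum (fun k : Fin n → ℕ =>
      ‖((List.ofFn D).prod * (List.ofFn fun i => star (T i) ^ k i).prod) x‖ ^ 2) (‖x‖ ^ 2) :=
    hasSum_norm_sq_prod_ofFn hDcomm hone
  obtain ⟨L, hL⟩ := exists_linearIsometry_lp_two hP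
  refine ⟨L, hL, fun i h k => ?_⟩
  rw [hL, hL, List.prod_ofFn_pow_add_single hstar, ← mul_assoc]
  rfl

/-- For a doubly commuting pure tuple `T` on `H`, the map
`(L_T h)(k) = D_{T*} T*^k h` is a well-defined isometry `H → ℓ²(ℕⁿ, D_{T*})` satisfying
`L_T Tᵢ* = Sᵢ* L_T` for the coordinate shifts `Sᵢ`, i.e.
`(L_T(Tᵢ* h))(k) = (L_T h)(k + eᵢ)`. -/
theorem stmt_10 {H : Type*} [NormedAddCommGroup H] [InnerProductSpace ℂ H] [CompleteSpace H]
    (n : ℕ) (T : Fin n → (H →L[ℂ] H))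
    (hcontr : ∀ i, ‖T i‖ ≤ 1)
    (hcomm : ∀ i j, T i * T j = T j * T i)
    (hdc : ∀ i j, i ≠ j → T i * star (T j) = star (T j) * T i)
    (hpure : ∀ i (h : H),
      Filter.Tendsto (fun m : ℕ => ((star (T i)) ^ m) h) Filter.atTop (nhds 0))
    (D : Fin n → (H →L[ℂ] H))
    (hDpos : ∀ i, (D i).IsPositive) (hDsq : ∀ i, (D i) ^ 2 = 1 - T i * star (T i)) :
    ∃ L : H →ₗᵢ[ℂ] lp (fun _ : Fin n → ℕ => H) 2,
      (∀ (h : H) (k : Fin n → ℕ),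
        (L h) k = (List.ofFn fun i => D i).prod
          (((List.ofFn fun i => (star (T i)) ^ (k i)).prod) h)) ∧
      (∀ i (h : H) (k : Fin n → ℕ),
        (L (star (T i) h)) k = (L h) (k + Pi.single i 1)) :=
  stmt_10_general n T hcomm hdc hpure D hDpos hDsq
end

section
/- Let E be a Hilbert space and Q a closed subspace of ℓ²(ℕⁿ, E) that is invariant under all shifts Sᵢ and all adjoints Sᵢ* (i.e., jointly reducing). Then Q = ℓ²(ℕⁿ, F) for some closed subspace F ⊆ E, i.e., Q consists of all sequences with values in F. -/
/-!
Write `δₖ e` for the sequence with value `e` at `k` and `0` elsewhere, and set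
`F = {e | δ₀ e ∈ Q}`. The adjoint `Sᵢ*` is the backward shift, so `Q` is stable under every
translation `a ↦ a (· + k)`, and `∏ᵢ (1 - Sᵢ Sᵢ*)` keeps only the coordinate `0`; hence
`a ∈ Q` gives `δ₀ (a k) ∈ Q` for all `k`. Conversely the shifts carry `δ₀ e` to `δₖ e`, and
since `Q` is closed, `a = ∑ₖ δₖ (a k)` lies in `Q` once every `a k ∈ F`.
-/

theorem Pi.single_one_induction {ι : Type*} [Finite ι] [DecidableEq ι] (p : (ι → ℕ) → Prop)
    (k : ι → ℕ) (zero : p 0) (add : ∀ k l, p k → p l → p (k + l))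
    (single : ∀ i, p (Pi.single i 1)) : p k := by
  refine Pi.single_induction p k zero add fun i m => ?_
  induction m with
  | zero => rwa [Pi.single_zero]
  | succ m ih => rw [Pi.single_add]; exact add _ _ ih (single i)

theorem Pi.single_one_le_iff {ι : Type*} [DecidableEq ι] {m : ι → ℕ} {i : ι} :
    Pi.single i 1 ≤ m ↔ m i ≠ 0 := by
  refine ⟨fun h => by simpa [Nat.one_le_iff_ne_zero] using h i, fun h j => ?_⟩
  rcases eq_or_ne j i with rfl | hj
  · simpa [Nat.one_le_iff_ne_zero] using h
  · simp [Pi.single_eq_of_ne hj]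

section CoordShift

variable {𝕜 : Type*} [RCLike 𝕜] {E : Type*} [NormedAddCommGroup E] [InnerProductSpace 𝕜 E]
  {ι : Type*} [Fintype ι] [DecidableEq ι]

local notation "ℓ²(" ι ", " E ")" => lp (fun _ : ι → ℕ => E) 2

def IsCoordShift (S : ι → ℓ²(ι, E) →L[𝕜] ℓ²(ι, E)) : Prop :=
  ∀ i a k, S i a k = if k i = 0 then 0 else a (k - Pi.single i 1)

variable {S : ι → ℓ²(ι, E) →L[𝕜] ℓ²(ι, E)}

theorem IsCoordShift.apply_single (hS : IsCoordShift S) (i : ι) (k : ι → ℕ) (e : E) :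
    S i (lp.single 2 k e) = lp.single 2 (k + Pi.single i 1) e := by
  ext m
  rw [hS, lp.single_apply, lp.single_apply]
  split_ifs with h
  · have hne : m ≠ k + Pi.single i 1 := by rintro rfl; simp at h
    simp [Pi.single_eq_of_ne hne]
  · have : m - Pi.single i 1 = k ↔ m = k + Pi.single i 1 :=
      tsub_eq_iff_eq_add_of_le (Pi.single_one_le_iff.2 h)
    by_cases hm : m = k + Pi.single i 1
    · rw [this.2 hm, Pi.single_eq_same, hm, Pi.single_eq_same]
    · rw [Pi.single_eq_of_ne hm, Pi.single_eq_of_ne (mt this.1 hm)]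

variable {Q : Submodule 𝕜 ℓ²(ι, E)}

theorem IsCoordShift.single_add_mem (hS : IsCoordShift S) (hQS : ∀ i, ∀ x ∈ Q, S i x ∈ Q)
    (k : ι → ℕ) {j : ι → ℕ} {e : E} (he : lp.single 2 j e ∈ Q) :
    lp.single 2 (j + k) e ∈ Q := by
  induction k using Pi.single_one_induction generalizing j with
  | zero => rwa [add_zero]
  | add k l hk hl => rw [← add_assoc]; exact hl (hk he)
  | single i => rw [← hS.apply_single]; exact hQS i _ he

variable [CompleteSpace E]

theorem IsCoordShift.adjoint_apply (hS : IsCoordShift S) (i : ι) (a : ℓ²(ι, E))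
    (k : ι → ℕ) : (S i).adjoint a k = a (k + Pi.single i 1) := by
  refine ext_inner_right 𝕜 fun e => ?_
  rw [← lp.inner_single_right, ContinuousLinearMap.adjoint_inner_left, hS.apply_single,
    lp.inner_single_right]

theorem IsCoordShift.sub_apply_adjoint_apply (hS : IsCoordShift S) (i : ι)
    (a : ℓ²(ι, E)) (m : ι → ℕ) :
    (a - S i ((S i).adjoint a)) m = if m i = 0 then a m else 0 := by
  rw [lp.coeFn_sub, Pi.sub_apply, hS]
  split_ifs with h
  · exact sub_zero _
  · rw [hS.adjoint_apply, tsub_add_cancel_of_le (Pi.single_one_le_iff.2 h), sub_self]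

theorem IsCoordShift.exists_mem_forall_apply_eq_apply_add (hS : IsCoordShift S)
    (hQS' : ∀ i, ∀ x ∈ Q, (S i).adjoint x ∈ Q) (k : ι → ℕ) {a : ℓ²(ι, E)} (ha : a ∈ Q) :
    ∃ b ∈ Q, ∀ m, b m = a (m + k) := by
  induction k using Pi.single_one_induction generalizing a with
  | zero => exact ⟨a, ha, fun m => by rw [add_zero]⟩
  | add k l hk hl =>
    obtain ⟨b, hbQ, hb⟩ := hk ha
    obtain ⟨c, hcQ, hc⟩ := hl hbQ
    exact ⟨c, hcQ, fun m => by rw [hc, hb, add_assoc, add_comm l]⟩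
  | single i => exact ⟨_, hQS' i a ha, hS.adjoint_apply i a⟩

theorem IsCoordShift.exists_mem_forall_apply_eq_ite (hS : IsCoordShift S)
    (hQS : ∀ i, ∀ x ∈ Q, S i x ∈ Q) (hQS' : ∀ i, ∀ x ∈ Q, (S i).adjoint x ∈ Q) (s : Finset ι)
    {a : ℓ²(ι, E)} (ha : a ∈ Q) :
    ∃ b ∈ Q, ∀ m, b m = if ∀ i ∈ s, m i = 0 then a m else 0 := by
  induction s using Finset.induction_on with
  | empty => exact ⟨a, ha, fun m => by simp⟩
  | insert i s _ ih =>
    obtain ⟨b, hbQ, hb⟩ := ih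
    refine ⟨b - S i ((S i).adjoint b), sub_mem hbQ (hQS i _ (hQS' i b hbQ)), fun m => ?_⟩
    simp only [hS.sub_apply_adjoint_apply, hb, Finset.forall_mem_insert, ite_and]

theorem IsCoordShift.single_zero_apply_zero_mem (hS : IsCoordShift S)
    (hQS : ∀ i, ∀ x ∈ Q, S i x ∈ Q) (hQS' : ∀ i, ∀ x ∈ Q, (S i).adjoint x ∈ Q)
    {a : ℓ²(ι, E)} (ha : a ∈ Q) : lp.single 2 0 (a 0) ∈ Q := by
  obtain ⟨b, hbQ, hb⟩ := hS.exists_mem_forall_apply_eq_ite hQS hQS' Finset.univ ha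
  convert hbQ
  ext m
  rw [hb, lp.single_apply]
  by_cases hm : m = 0
  · simp [hm]
  · have : ¬∀ i ∈ Finset.univ, m i = 0 := fun h => hm (funext fun i => h i (Finset.mem_univ i))
    rw [if_neg this, Pi.single_eq_of_ne hm]

theorem IsCoordShift.mem_iff_forall_single_zero_mem (hS : IsCoordShift S)
    (hQS : ∀ i, ∀ x ∈ Q, S i x ∈ Q) (hQS' : ∀ i, ∀ x ∈ Q, (S i).adjoint x ∈ Q)
    (hQ : IsClosed (Q : Set ℓ²(ι, E))) (a : ℓ²(ι, E)) :
    a ∈ Q ↔ ∀ k, lp.single 2 0 (a k) ∈ Q := by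
  refine ⟨fun ha k => ?_, fun ha => ?_⟩
  · obtain ⟨b, hbQ, hb⟩ := hS.exists_mem_forall_apply_eq_apply_add hQS' k ha
    simpa [hb] using hS.single_zero_apply_zero_mem hQS hQS' hbQ
  · refine hQ.mem_of_tendsto (lp.hasSum_single ENNReal.ofNat_ne_top a)
      (Filter.Eventually.of_forall fun s => Q.sum_mem fun k _ => ?_)
    simpa using hS.single_add_mem hQS k (ha k)

end CoordShift

/-- A closed subspace `Q ⊆ ℓ²(ℕⁿ, E)` that is invariant under all coordinate shifts `Sᵢ`
and all their adjoints (i.e. jointly reducing) is of the form `ℓ²(ℕⁿ, F)` for some closed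
subspace `F ⊆ E`. -/
theorem stmt_16 {E : Type*} [NormedAddCommGroup E] [InnerProductSpace ℂ E] [CompleteSpace E]
    (n : ℕ)
    (S : Fin n → (lp (fun _ : Fin n → ℕ => E) 2 →L[ℂ] lp (fun _ : Fin n → ℕ => E) 2))
    (hS : ∀ i (a : lp (fun _ : Fin n → ℕ => E) 2) (k : Fin n → ℕ),
      (S i a) k = if k i = 0 then 0 else a (k - Pi.single i 1))
    (Q : Submodule ℂ (lp (fun _ : Fin n → ℕ => E) 2))
    (hQclosed : IsClosed (Q : Set (lp (fun _ : Fin n → ℕ => E) 2)))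
    (hQinv : ∀ i, ∀ x ∈ Q, S i x ∈ Q)
    (hQinv' : ∀ i, ∀ x ∈ Q, ContinuousLinearMap.adjoint (S i) x ∈ Q) :
    ∃ F : Submodule ℂ E, IsClosed (F : Set E) ∧
      (Q : Set (lp (fun _ : Fin n → ℕ => E) 2)) =
        {a : lp (fun _ : Fin n → ℕ => E) 2 | ∀ k, a k ∈ F} := by
  let single₀ := lp.singleContinuousLinearMap ℂ (fun _ : Fin n → ℕ => E) 2 0
  refine ⟨Q.comap single₀.toLinearMap, hQclosed.preimage single₀.continuous, ?_⟩
  ext a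
  exact IsCoordShift.mem_iff_forall_single_zero_mem hS hQinv hQinv' hQclosed a
end
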